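/- Let P = P_1 ∪ P_2 be a collection of cells, where P_1 and P_2 are sub-collections of cells of P having no cell in common and with V(P_1) ∩ V(P_2) = {v} for a single vertex v. Fix a monomial order < on S = K[x_v : v ∈ V(P)] and suppose that for i = 1, 2 there exists f_i ∈ S with in_<(f_i) a squarefree monomial such that I_{P_i} ∈ C_{f_i}, and that in_<(f_1 f_2 x_v) is a squarefree monomial (in particular x_v divides neither in_<(f_1) nor in_<(f_2)). Then I_P ∈ C_{f_1 f_2 x_v}; in particular, I_P is a Knutson ideal. -/

import Mathlib

open MvPolynomial

universe u v

/-! ### Cells and collections of cells -/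

/-- A cell, identified by its lower-left corner: the cell `[a, a+(1,1)]`. -/
abbrev Cell : Type := ℕ × ℕ

/-- The four vertices (corners) of a cell. -/
def cellVertices (c : Cell) : Finset (ℕ × ℕ) :=
  {(c.1, c.2), (c.1 + 1, c.2), (c.1, c.2 + 1), (c.1 + 1, c.2 + 1)}

/-- The vertex set of a collection of cells. -/
def vertexSet (P : Finset Cell) : Finset (ℕ × ℕ) :=
  P.biUnion cellVertices

/-- Two cells share a common edge. -/
def AdjCells (c d : Cell) : Prop :=
  (c.1 = d.1 ∧ (c.2 + 1 = d.2 ∨ d.2 + 1 = c.2)) ∨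
    (c.2 = d.2 ∧ (c.1 + 1 = d.1 ∨ d.1 + 1 = c.1))

/-- A polyomino: a nonempty collection of cells with positive coordinates in which
any two cells are connected by a path of cells of the collection, consecutive
ones sharing an edge. -/
def IsPolyomino (P : Finset Cell) : Prop :=
  P.Nonempty ∧ (∀ c ∈ P, 1 ≤ c.1 ∧ 1 ≤ c.2) ∧
    ∀ c ∈ P, ∀ d ∈ P,
      Relation.ReflTransGen (fun x y => x ∈ P ∧ y ∈ P ∧ AdjCells x y) c d

/-- A collection of cells is simple if any two cells not in it are connected by a path
of cells not in it. -/
def IsSimple (P : Finset Cell) : Prop :=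
  ∀ c d : Cell, c ∉ P → d ∉ P →
    Relation.ReflTransGen (fun x y => x ∉ P ∧ y ∉ P ∧ AdjCells x y) c d

/-- A collection of cells is thin if it contains no 2×2 square of cells. -/
def IsThin (P : Finset Cell) : Prop :=
  ¬ ∃ c : Cell, c ∈ P ∧ (c.1 + 1, c.2) ∈ P ∧ (c.1, c.2 + 1) ∈ P ∧ (c.1 + 1, c.2 + 1) ∈ P

/-- The cell with lower-left corner `c` lies inside the interval `[u, w]`. -/
def CellInInterval (u w : ℕ × ℕ) (c : Cell) : Prop :=
  u.1 ≤ c.1 ∧ c.1 + 1 ≤ w.1 ∧ u.2 ≤ c.2 ∧ c.2 + 1 ≤ w.2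

/-- `[a, b]` is an inner interval of the collection of cells `P`:
it is a proper interval all of whose cells belong to `P`. -/
def IsInnerInterval (P : Finset Cell) (a b : ℕ × ℕ) : Prop :=
  a.1 < b.1 ∧ a.2 < b.2 ∧ ∀ c : Cell, CellInInterval a b c → c ∈ P

/-- A maximal inner interval of `P`. -/
def IsMaximalInnerInterval (P : Finset Cell) (a b : ℕ × ℕ) : Prop :=
  IsInnerInterval P a b ∧
    ∀ a' b' : ℕ × ℕ, IsInnerInterval P a' b' → a'.1 ≤ a.1 → a'.2 ≤ a.2 →
      b.1 ≤ b'.1 → b.2 ≤ b'.2 → a' = a ∧ b' = b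

/-! ### Convexity notions -/

def HorizontallyConvex (P : Finset Cell) : Prop :=
  ∀ i k j l : ℕ, (i, j) ∈ P → (k, j) ∈ P → i ≤ l → l ≤ k → (l, j) ∈ P

def VerticallyConvex (P : Finset Cell) : Prop :=
  ∀ i j k l : ℕ, (i, j) ∈ P → (i, k) ∈ P → j ≤ l → l ≤ k → (i, l) ∈ P

/-- A parallelogram polyomino: a convex polyomino whose vertex set is a sublattice of ℕ². -/
def IsParallelogram (P : Finset Cell) : Prop :=
  IsPolyomino P ∧ HorizontallyConvex P ∧ VerticallyConvex P ∧
    ∀ u ∈ vertexSet P, ∀ v ∈ vertexSet P,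
      (min u.1 v.1, min u.2 v.2) ∈ vertexSet P ∧ (max u.1 v.1, max u.2 v.2) ∈ vertexSet P

/-- `v` is a left-most vertex of `P`. -/
def IsLeftmost (P : Finset Cell) (v : ℕ × ℕ) : Prop :=
  v ∈ vertexSet P ∧ ∀ w ∈ vertexSet P, w.2 = v.2 → v.1 ≤ w.1

/-- A ladder polyomino: a horizontally convex polyomino each of whose left-most vertices,
except the lowest one, is the upper-left vertex of a cell of `P`. -/
def IsLadder (P : Finset Cell) : Prop :=
  IsPolyomino P ∧ HorizontallyConvex P ∧
    ∀ v : ℕ × ℕ, IsLeftmost P v →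
      (∀ w : ℕ × ℕ, IsLeftmost P w → v.2 ≤ w.2) ∨ (1 ≤ v.2 ∧ (v.1, v.2 - 1) ∈ P)

/-- The region of the plane covered by a collection of cells. -/
def spSet (P : Finset Cell) : Set (ℝ × ℝ) :=
  ⋃ c ∈ P, {x : ℝ × ℝ | (c.1 : ℝ) ≤ x.1 ∧ x.1 ≤ (c.1 : ℝ) + 1 ∧
      (c.2 : ℝ) ≤ x.2 ∧ x.2 ≤ (c.2 : ℝ) + 1}

/-- A ladder polyomino `P` is based on a polyomino `Q`:
`sp(P) ∩ sp(Q)` is the horizontal segment from `a₁` to `(b, a₁.2)` where `a₁` is the lowest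
left-most vertex of `P` and `b` is maximal with `(b, a₁.2) ∈ V(P)`. -/
def BasedOn (P Q : Finset Cell) : Prop :=
  ∃ a₁ : ℕ × ℕ, ∃ b : ℕ, IsLeftmost P a₁ ∧ (∀ w : ℕ × ℕ, IsLeftmost P w → a₁.2 ≤ w.2) ∧
    (b, a₁.2) ∈ vertexSet P ∧ (∀ v : ℕ, (v, a₁.2) ∈ vertexSet P → v ≤ b) ∧
    spSet P ∩ spSet Q =
      {x : ℝ × ℝ | (a₁.1 : ℝ) ≤ x.1 ∧ x.1 ≤ (b : ℝ) ∧ x.2 = (a₁.2 : ℝ)}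

/-! ### Closed and weakly closed paths -/

/-- A closed path polyomino. -/
def IsClosedPath (P : Finset Cell) : Prop :=
  ∃ (n : ℕ) (A : ℕ → Cell), 6 ≤ n ∧
    A n = A 0 ∧
    (∀ c : Cell, c ∈ P ↔ ∃ i < n, A i = c) ∧
    (∀ i j : ℕ, 1 ≤ i → i < j → j ≤ n → A i ≠ A j) ∧
    (∀ i < n, AdjCells (A i) (A (i + 1))) ∧
    (∀ i < n, ∀ j < n,
      ((j : ZMod n) ≠ (i : ZMod n) - 2 ∧ (j : ZMod n) ≠ (i : ZMod n) - 1 ∧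
       (j : ZMod n) ≠ (i : ZMod n) ∧ (j : ZMod n) ≠ (i : ZMod n) + 1 ∧
       (j : ZMod n) ≠ (i : ZMod n) + 2) →
      cellVertices (A i) ∩ cellVertices (A j) = ∅)

/-- A weakly closed path polyomino. -/
def IsWeaklyClosedPath (P : Finset Cell) : Prop :=
  ∃ (n : ℕ) (A : ℕ → Cell), 6 ≤ n ∧
    A n = A 0 ∧
    (∀ c : Cell, c ∈ P ↔ ∃ i < n, A i = c) ∧
    (∀ i j : ℕ, 1 ≤ i → i < j → j ≤ n → A i ≠ A j) ∧
    (cellVertices (A 0) ∩ cellVertices (A (n - 1))).card = 1 ∧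
    (∀ i : ℕ, i ≤ n - 2 → AdjCells (A i) (A (i + 1))) ∧
    (∀ i : ℕ, 1 ≤ i → i ≤ n → ∀ j : ℕ, 1 ≤ j → j ≤ n →
      ((j : ZMod n) ≠ (i : ZMod n) - 2 ∧ (j : ZMod n) ≠ (i : ZMod n) - 1 ∧
       (j : ZMod n) ≠ (i : ZMod n) ∧ (j : ZMod n) ≠ (i : ZMod n) + 1 ∧
       (j : ZMod n) ≠ (i : ZMod n) + 2) →
      cellVertices (A i) ∩ cellVertices (A j) = ∅)

/-! ### Polyomino ideals -/

/-- The polynomial ring `K[x_v : v ∈ V(P)]`. -/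
abbrev PolyRing (K : Type*) [Field K] (P : Finset Cell) : Type _ :=
  MvPolynomial {v : ℕ × ℕ // v ∈ vertexSet P} K

/-- The binomials attached to the inner intervals of a sub-collection `Q` of `P`,
viewed inside `K[x_v : v ∈ V(P)]`. -/
def innerIntervalBinomials (K : Type*) [Field K] (P Q : Finset Cell) :
    Set (PolyRing K P) :=
  {f | ∃ a b c d : {v : ℕ × ℕ // v ∈ vertexSet P},
      IsInnerInterval Q (a : ℕ × ℕ) (b : ℕ × ℕ) ∧
      (c : ℕ × ℕ) = ((a : ℕ × ℕ).1, (b : ℕ × ℕ).2) ∧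
      (d : ℕ × ℕ) = ((b : ℕ × ℕ).1, (a : ℕ × ℕ).2) ∧
      f = X a * X b - X c * X d}

/-- The ideal of inner 2-minors of a sub-collection `Q` of `P`, inside `K[x_v : v ∈ V(P)]`. -/
noncomputable def cellsIdeal (K : Type*) [Field K] (P Q : Finset Cell) : Ideal (PolyRing K P) :=
  Ideal.span (innerIntervalBinomials K P Q)

/-- The polyomino ideal `I_P`. -/
noncomputable def polyominoIdeal (K : Type*) [Field K] (P : Finset Cell) : Ideal (PolyRing K P) :=
  cellsIdeal K P P

/-! ### Monomial orders, initial monomials, Knutson ideals -/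

/-- `μ` is the initial (leading) monomial of `f` with respect to the strict
monomial-comparison relation `lt`. -/
def IsInitialMonomialRel {σ K : Type*} [CommSemiring K]
    (lt : (σ →₀ ℕ) → (σ →₀ ℕ) → Prop) (f : MvPolynomial σ K) (μ : σ →₀ ℕ) : Prop :=
  μ ∈ f.support ∧ ∀ ν ∈ f.support, ν ≠ μ → lt ν μ

/-- The strict comparison relation of a monomial order. -/
def monomialLT {σ : Type*} (m : MonomialOrder σ) (μ ν : σ →₀ ℕ) : Prop :=
  m.toSyn μ < m.toSyn ν

/-- A squarefree monomial exponent. -/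
def SquarefreeMonomial {σ : Type*} (μ : σ →₀ ℕ) : Prop := ∀ v, μ v ≤ 1

/-- The initial monomial of `f` with respect to `m` exists and is squarefree. -/
def HasSquarefreeInitial {σ K : Type*} [CommSemiring K] (m : MonomialOrder σ)
    (f : MvPolynomial σ K) : Prop :=
  ∃ μ, IsInitialMonomialRel (monomialLT m) f μ ∧ SquarefreeMonomial μ

/-- The family `C_f` of Knutson ideals associated to `f`: the smallest family of ideals
containing `(f)` and closed under colon ideals, sums and intersections. -/
inductive KnutsonClass {σ K : Type*} [Field K] (f : MvPolynomial σ K) :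
    Ideal (MvPolynomial σ K) → Prop
  | base : KnutsonClass f (Ideal.span {f})
  | colon (I J : Ideal (MvPolynomial σ K)) :
      KnutsonClass f I → KnutsonClass f (Submodule.colon I J)
  | add (I J : Ideal (MvPolynomial σ K)) :
      KnutsonClass f I → KnutsonClass f J → KnutsonClass f (I + J)
  | inter (I J : Ideal (MvPolynomial σ K)) :
      KnutsonClass f I → KnutsonClass f J → KnutsonClass f (I ⊓ J)

/-- An ideal is a Knutson ideal if it belongs to `C_f` for some `f` whose initial
monomial (with respect to some monomial order) is squarefree. -/
def IsKnutsonIdeal {σ : Type u} {K : Type*} [Field K] (I : Ideal (MvPolynomial σ K)) : Prop :=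
  ∃ (m : MonomialOrder.{u, u} σ) (f : MvPolynomial σ K),
    HasSquarefreeInitial m f ∧ KnutsonClass f I

/-! ### Height, unmixedness, homogeneity, König type -/

/-- The height of an ideal: the infimum of the heights of the primes containing it. -/
noncomputable def idealHeight {R : Type*} [CommRing R] (I : Ideal R) : ℕ∞ :=
  ⨅ (p : PrimeSpectrum R) (_ : I ≤ p.asIdeal), Order.height p

/-- An ideal is unmixed if all its associated primes have the same height. -/
def IsUnmixed {R : Type*} [CommRing R] (I : Ideal R) : Prop :=
  ∀ p q : Ideal R, IsAssociatedPrime p (R ⧸ I) → IsAssociatedPrime q (R ⧸ I) →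
    idealHeight p = idealHeight q

/-- A homogeneous ideal of a polynomial ring. -/
def IsHomogeneousIdeal {σ K : Type*} [CommSemiring K] (I : Ideal (MvPolynomial σ K)) : Prop :=
  ∀ f ∈ I, ∀ n : ℕ, MvPolynomial.homogeneousComponent n f ∈ I

/-- `I` is of König type with respect to the monomial order `m` and the polynomials
`f 0, …, f (h-1)`. -/
def IsKonigTypeWrt {σ K : Type*} [Field K] (m : MonomialOrder σ)
    (I : Ideal (MvPolynomial σ K)) (h : ℕ) (f : Fin h → MvPolynomial σ K) : Prop :=
  idealHeight I = (h : ℕ∞) ∧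
  Function.Injective f ∧
  (∃ G : Set (MvPolynomial σ K),
    (∀ g ∈ G, ∃ n : ℕ, MvPolynomial.IsHomogeneous g n) ∧
    Ideal.span G = I ∧
    (∀ g ∈ G, Ideal.span (G \ {g}) ≠ I) ∧
    ∀ i, f i ∈ G) ∧
  ∃ μ : Fin h → (σ →₀ ℕ),
    (∀ i, IsInitialMonomialRel (monomialLT m) (f i) (μ i)) ∧
    RingTheory.Sequence.IsRegular (MvPolynomial σ K)
      (List.ofFn fun i =>
        (MvPolynomial.monomial (μ i) (MvPolynomial.coeff (μ i) (f i)) : MvPolynomial σ K))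

/-- `I` is of König type. -/
def IsKonigType {σ : Type u} {K : Type*} [Field K] (I : Ideal (MvPolynomial σ K)) : Prop :=
  ∃ (m : MonomialOrder.{u, u} σ) (h : ℕ) (f : Fin h → MvPolynomial σ K), IsKonigTypeWrt m I h f

/-! ### The graded reverse lexicographic order used in the paper -/

/-- The variable order `x_{(i,j)} < x_{(k,l)}` iff `i < k`, or `i = k` and `j < l`. -/
def VarLT (u v : ℕ × ℕ) : Prop := u.1 < v.1 ∨ (u.1 = v.1 ∧ u.2 < v.2)

/-- The strict graded reverse lexicographic comparison of exponent vectors, where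
variables are embedded into ℕ² and ordered by `VarLT`. -/
def GrevlexLT {σ : Type*} (emb : σ → ℕ × ℕ) (μ ν : σ →₀ ℕ) : Prop :=
  (μ.sum fun _ e => e) < (ν.sum fun _ e => e) ∨
    ((μ.sum fun _ e => e) = (ν.sum fun _ e => e) ∧
      ∃ v, ν v < μ v ∧ ∀ w, VarLT (emb w) (emb v) → μ w = ν w)

/-- The initial ideal of `I` with respect to the relation `lt`. -/
noncomputable def initialIdealRel {σ K : Type*} [Field K] (lt : (σ →₀ ℕ) → (σ →₀ ℕ) → Prop)
    (I : Ideal (MvPolynomial σ K)) : Ideal (MvPolynomial σ K) :=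
  Ideal.span {g | ∃ f ∈ I, ∃ μ, IsInitialMonomialRel lt f μ ∧
    g = MvPolynomial.monomial μ (1 : K)}

/-- `G` is a Gröbner basis of `I` with respect to the relation `lt`. -/
def IsGroebnerBasisRel {σ K : Type*} [Field K] (lt : (σ →₀ ℕ) → (σ →₀ ℕ) → Prop)
    (G : Set (MvPolynomial σ K)) (I : Ideal (MvPolynomial σ K)) : Prop :=
  (∀ g ∈ G, g ≠ 0 ∧ g ∈ I) ∧
    Ideal.span {g | ∃ f ∈ G, ∃ μ, IsInitialMonomialRel lt f μ ∧
      g = MvPolynomial.monomial μ (1 : K)} = initialIdealRel lt I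

/-! ### Anti-diagonal chains of vertices and the associated determinants -/

/-- The vertices `v_{k,l} = (i+l, j+n+1-l)`, `1 ≤ l ≤ n`, of an anti-diagonal chain. -/
def chainVerts (i j n : ℕ) : Finset (ℕ × ℕ) :=
  (Finset.Icc 1 n).image fun l => (i + l, j + n + 1 - l)

/-- The cells whose anti-diagonal vertices are consecutive vertices of the chain. -/
def chainCells (i j n : ℕ) : Finset Cell :=
  (Finset.Icc 1 (n - 1)).image fun l => (i + l, j + n - l)

/-- The chain starting at `(i+1, j+n)` of length `n` is a maximal successor-chain in `P`. -/
def IsDiagChain (P : Finset Cell) (i j n : ℕ) : Prop :=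
  1 ≤ n ∧
  (∀ l : ℕ, 1 ≤ l → l ≤ n → (i + l, j + n + 1 - l) ∈ vertexSet P) ∧
  (∀ l : ℕ, 1 ≤ l → l ≤ n - 1 → (i + l, j + n - l) ∈ P) ∧
  (i, j + n) ∉ P ∧
  (i + n, j) ∉ P

/-- The data `c k = (i_k, j_k, n_k)`, `k : Fin s`, is the chain partition of `V(P)`. -/
def IsDiagChainPartition (P : Finset Cell) (s : ℕ) (c : Fin s → ℕ × ℕ × ℕ) : Prop :=
  (∀ k, IsDiagChain P (c k).1 (c k).2.1 (c k).2.2) ∧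
  (∀ k l, k ≠ l →
    Disjoint (chainVerts (c k).1 (c k).2.1 (c k).2.2)
      (chainVerts (c l).1 (c l).2.1 (c l).2.2)) ∧
  (Finset.univ.biUnion (fun k => chainVerts (c k).1 (c k).2.1 (c k).2.2) = vertexSet P) ∧
  (∀ k l : Fin s, k < l →
    ((c k).1 + 1) + ((c k).2.1 + (c k).2.2) < ((c l).1 + 1) + ((c l).2.1 + (c l).2.2) ∨
    (((c k).1 + 1) + ((c k).2.1 + (c k).2.2) = ((c l).1 + 1) + ((c l).2.1 + (c l).2.2) ∧
      (c k).1 + 1 < (c l).1 + 1))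

/-- The determinant `f_k` of the matrix `M_k` associated to a chain: the `(a,b)` entry is
`x_{(i+a, j+b)}` if `(i+a, j+b) ∈ V(P)` and `0` otherwise (`1 ≤ a, b ≤ n`). -/
noncomputable def chainDet (K : Type*) [Field K] (P : Finset Cell) (i j n : ℕ) :
    PolyRing K P :=
  Matrix.det (Matrix.of fun a b : Fin n =>
    if h : (i + (a : ℕ) + 1, j + (b : ℕ) + 1) ∈ vertexSet P then
      (X ⟨(i + (a : ℕ) + 1, j + (b : ℕ) + 1), h⟩ : PolyRing K P) else 0)

/-- The exponent vector of the squarefree monomial `∏_{v ∈ V} x_v` inside `K[x_v : v ∈ V(P)]`. -/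
noncomputable def vertexMonomial (P : Finset Cell) (V : Finset (ℕ × ℕ)) :
    {v : ℕ × ℕ // v ∈ vertexSet P} →₀ ℕ :=
  ∑ v ∈ Finset.filter (fun v : {v : ℕ × ℕ // v ∈ vertexSet P} => (v : ℕ × ℕ) ∈ V)
      (vertexSet P).attach, Finsupp.single v 1

/-! ### The conditions (C1), (C2), (C3) on thin collections of cells -/

/-- (C1): `P` contains no three cells with upper-left vertices
`(i,j), (i+1,j-1), (i+2,j-2)`. -/
def CondC1 (P : Finset Cell) : Prop :=
  ¬ ∃ i m : ℕ, (i, m + 2) ∈ P ∧ (i + 1, m + 1) ∈ P ∧ (i + 2, m) ∈ P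

/-- (C2): for a vertical maximal inner interval `[a, b]` of width one, neither the cell
with lower-right vertex `(a.1, b.2)` nor the cell with upper-left vertex `(a.1+1, a.2)`
belongs to `P`. -/
def CondC2 (P : Finset Cell) : Prop :=
  ∀ a b : ℕ × ℕ, IsMaximalInnerInterval P a b → b.1 = a.1 + 1 →
    (1 ≤ a.1 → (a.1 - 1, b.2) ∉ P) ∧ (1 ≤ a.2 → (a.1 + 1, a.2 - 1) ∉ P)

/-- (C3): for a horizontal maximal inner interval `[a, b]` of height one, neither the cell
with lower-right vertex `(a.1, a.2+1)` nor the cell with upper-left vertex `(b.1, a.2)`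
belongs to `P`. -/
def CondC3 (P : Finset Cell) : Prop :=
  ∀ a b : ℕ × ℕ, IsMaximalInnerInterval P a b → b.2 = a.2 + 1 →
    (1 ≤ a.1 → (a.1 - 1, a.2 + 1) ∉ P) ∧ (1 ≤ a.2 → (b.1, a.2 - 1) ∉ P)


/-! Two cells sharing an edge have two common vertices while `V(P₁) ∩ V(P₂) = {v}`, so they
cannot lie one in `P₁` and one in `P₂`; as the cells of an inner interval are connected through shared edges, every inner
interval of `P₁ ∪ P₂` is one of `P₁` or of `P₂`, and `I_P = I_{P₁} + I_{P₂}`.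
On the algebraic side, `(f₁) = (f₁ f₂ x_v) : (f₂ x_v)` lies in `C_{f₁ f₂ x_v}`, hence so does
all of `C_{f₁}`, in particular `I_{P₁}`; likewise `I_{P₂}`, and `C_{f₁ f₂ x_v}` is closed
under sums. -/

theorem Ideal.span_singleton_mul_colon_span_singleton {R : Type*} [CommRing R] [IsDomain R]
    (a : R) {b : R} (hb : b ≠ 0) :
    (Ideal.span {a * b}).colon (Ideal.span {b}) = Ideal.span {a} := by
  ext x
  rw [Ideal.mem_colon_span_singleton, Ideal.mem_span_singleton, Ideal.mem_span_singleton,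
    mul_dvd_mul_iff_right hb]

section Knutson

variable {σ K : Type*} [Field K]

theorem HasSquarefreeInitial.ne_zero {m : MonomialOrder σ} {f : MvPolynomial σ K}
    (h : HasSquarefreeInitial m f) : f ≠ 0 := by
  rintro rfl
  obtain ⟨μ, ⟨hμ, -⟩, -⟩ := h
  simp at hμ

theorem KnutsonClass.trans {f g : MvPolynomial σ K} (h : KnutsonClass g (Ideal.span {f}))
    {I : Ideal (MvPolynomial σ K)} (hI : KnutsonClass f I) : KnutsonClass g I := by
  induction hI with
  | base => exact h
  | colon I J _ ih => exact .colon I J ih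
  | add I J _ _ ih₁ ih₂ => exact .add I J ih₁ ih₂
  | inter I J _ _ ih₁ ih₂ => exact .inter I J ih₁ ih₂

theorem KnutsonClass.span_singleton_of_mul (a : MvPolynomial σ K) {b : MvPolynomial σ K}
    (hb : b ≠ 0) : KnutsonClass (a * b) (Ideal.span {a}) :=
  Ideal.span_singleton_mul_colon_span_singleton a hb ▸ .colon _ (Ideal.span {b}) .base

end Knutson

theorem iff_of_forall_iff_succ {p : ℕ → Prop} {a b : ℕ}
    (h : ∀ i, a ≤ i → i + 1 < b → (p i ↔ p (i + 1))) {i : ℕ} (ha : a ≤ i) (hb : i < b) :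
    p i ↔ p a := by
  induction i, ha using Nat.le_induction with
  | base => rfl
  | succ i ha ih => exact (h i ha hb).symm.trans (ih (by omega))

theorem IsInnerInterval.mono {P Q : Finset Cell} (hPQ : P ⊆ Q) {a b : ℕ × ℕ}
    (h : IsInnerInterval P a b) : IsInnerInterval Q a b :=
  ⟨h.1, h.2.1, fun c hc => hPQ (h.2.2 c hc)⟩

section Gluing

variable {P₁ P₂ : Finset Cell} {v : ℕ × ℕ}

theorem not_mem_left_mem_right_of_two_common_vertices (hv : vertexSet P₁ ∩ vertexSet P₂ = {v})
    {c d : Cell} (hc : c ∈ P₁) (hd : d ∈ P₂) {w₁ w₂ : ℕ × ℕ} (hne : w₁ ≠ w₂)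
    (h₁ : w₁ ∈ cellVertices c ∩ cellVertices d) (h₂ : w₂ ∈ cellVertices c ∩ cellVertices d) :
    False := by
  have hcommon : ∀ w ∈ cellVertices c ∩ cellVertices d, w = v := fun w hw => by
    obtain ⟨hwc, hwd⟩ := Finset.mem_inter.1 hw
    have : w ∈ vertexSet P₁ ∩ vertexSet P₂ :=
      Finset.mem_inter.2 ⟨Finset.mem_biUnion.2 ⟨c, hc, hwc⟩, Finset.mem_biUnion.2 ⟨d, hd, hwd⟩⟩
    simpa [hv] using this
  exact hne ((hcommon w₁ h₁).trans (hcommon w₂ h₂).symm)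

theorem mem_left_iff_of_two_common_vertices (hv : vertexSet P₁ ∩ vertexSet P₂ = {v})
    {c d : Cell} (hc : c ∈ P₁ ∪ P₂) (hd : d ∈ P₁ ∪ P₂) {w₁ w₂ : ℕ × ℕ} (hne : w₁ ≠ w₂)
    (h₁ : w₁ ∈ cellVertices c ∩ cellVertices d) (h₂ : w₂ ∈ cellVertices c ∩ cellVertices d) :
    c ∈ P₁ ↔ d ∈ P₁ := by
  constructor
  · intro hc₁
    refine (Finset.mem_union.1 hd).resolve_right fun hd₂ => ?_
    exact not_mem_left_mem_right_of_two_common_vertices hv hc₁ hd₂ hne h₁ h₂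
  · intro hd₁
    refine (Finset.mem_union.1 hc).resolve_right fun hc₂ => ?_
    rw [Finset.inter_comm] at h₁ h₂
    exact not_mem_left_mem_right_of_two_common_vertices hv hd₁ hc₂ hne h₁ h₂

theorem mem_left_iff_of_horizontal_neighbour (hv : vertexSet P₁ ∩ vertexSet P₂ = {v})
    {i j : ℕ} (h : (i, j) ∈ P₁ ∪ P₂) (h' : (i + 1, j) ∈ P₁ ∪ P₂) :
    (i, j) ∈ P₁ ↔ (i + 1, j) ∈ P₁ :=
  mem_left_iff_of_two_common_vertices hv h h' (w₁ := (i + 1, j)) (w₂ := (i + 1, j + 1))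
    (by simp) (by simp [cellVertices]) (by simp [cellVertices])

theorem mem_left_iff_of_vertical_neighbour (hv : vertexSet P₁ ∩ vertexSet P₂ = {v})
    {i j : ℕ} (h : (i, j) ∈ P₁ ∪ P₂) (h' : (i, j + 1) ∈ P₁ ∪ P₂) :
    (i, j) ∈ P₁ ↔ (i, j + 1) ∈ P₁ :=
  mem_left_iff_of_two_common_vertices hv h h' (w₁ := (i, j + 1)) (w₂ := (i + 1, j + 1))
    (by simp) (by simp [cellVertices]) (by simp [cellVertices])

theorem mem_left_iff_corner_of_cellInInterval (hv : vertexSet P₁ ∩ vertexSet P₂ = {v})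
    {a b : ℕ × ℕ} (hab : ∀ c, CellInInterval a b c → c ∈ P₁ ∪ P₂) {c : Cell}
    (hc : CellInInterval a b c) :
    c ∈ P₁ ↔ (a.1, a.2) ∈ P₁ := by
  obtain ⟨i, j⟩ := c
  obtain ⟨hai, hib, haj, hjb⟩ := hc
  calc (i, j) ∈ P₁ ↔ (i, a.2) ∈ P₁ :=
        iff_of_forall_iff_succ (p := fun j => (i, j) ∈ P₁) (b := b.2)
          (fun j hj hjb => mem_left_iff_of_vertical_neighbour hv
            (hab _ ⟨hai, hib, hj, by omega⟩) (hab _ ⟨hai, hib, by omega, hjb⟩)) haj hjb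
    _ ↔ (a.1, a.2) ∈ P₁ :=
        iff_of_forall_iff_succ (p := fun i => (i, a.2) ∈ P₁) (b := b.1)
          (fun i hi hib => mem_left_iff_of_horizontal_neighbour hv
            (hab _ ⟨hi, by omega, le_rfl, by omega⟩)
            (hab _ ⟨by omega, hib, le_rfl, by omega⟩))
          hai hib

theorem IsInnerInterval.left_or_right_of_union (hv : vertexSet P₁ ∩ vertexSet P₂ = {v})
    {a b : ℕ × ℕ} (h : IsInnerInterval (P₁ ∪ P₂) a b) :
    IsInnerInterval P₁ a b ∨ IsInnerInterval P₂ a b := by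
  obtain ⟨h₁, h₂, hab⟩ := h
  have hcorner := fun {c} => mem_left_iff_corner_of_cellInInterval hv hab (c := c)
  by_cases ha : (a.1, a.2) ∈ P₁
  · exact .inl ⟨h₁, h₂, fun c hc => (hcorner hc).2 ha⟩
  · exact .inr ⟨h₁, h₂, fun c hc =>
      (Finset.mem_union.1 (hab c hc)).resolve_left fun hc₁ => ha ((hcorner hc).1 hc₁)⟩

theorem innerIntervalBinomials_union (hv : vertexSet P₁ ∩ vertexSet P₂ = {v})
    (K : Type*) [Field K] (P : Finset Cell) :
    innerIntervalBinomials K P (P₁ ∪ P₂) =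
      innerIntervalBinomials K P P₁ ∪ innerIntervalBinomials K P P₂ := by
  ext f
  constructor
  · rintro ⟨a, b, c, d, hI, hc, hd, rfl⟩
    rcases hI.left_or_right_of_union hv with hI | hI
    · exact .inl ⟨a, b, c, d, hI, hc, hd, rfl⟩
    · exact .inr ⟨a, b, c, d, hI, hc, hd, rfl⟩
  · rintro (⟨a, b, c, d, hI, hc, hd, rfl⟩ | ⟨a, b, c, d, hI, hc, hd, rfl⟩)
    · exact ⟨a, b, c, d, hI.mono Finset.subset_union_left, hc, hd, rfl⟩
    · exact ⟨a, b, c, d, hI.mono Finset.subset_union_right, hc, hd, rfl⟩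

theorem cellsIdeal_union (hv : vertexSet P₁ ∩ vertexSet P₂ = {v}) (K : Type*) [Field K]
    (P : Finset Cell) :
    cellsIdeal K P (P₁ ∪ P₂) = cellsIdeal K P P₁ + cellsIdeal K P P₂ := by
  rw [cellsIdeal, innerIntervalBinomials_union hv, Ideal.span_union]
  rfl

end Gluing

theorem glue_at_vertex_knutson_general (K : Type*) [Field K] (P P₁ P₂ : Finset Cell)
    (hunion : P = P₁ ∪ P₂)
    (v : ℕ × ℕ) (hv : vertexSet P₁ ∩ vertexSet P₂ = {v}) (hvP : v ∈ vertexSet P)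
    (m : MonomialOrder.{0, v} {u : ℕ × ℕ // u ∈ vertexSet P})
    (f₁ f₂ : PolyRing K P)
    (hK₁ : KnutsonClass f₁ (cellsIdeal K P P₁))
    (hK₂ : KnutsonClass f₂ (cellsIdeal K P P₂))
    (hsf : HasSquarefreeInitial m (f₁ * f₂ * X ⟨v, hvP⟩)) :
    KnutsonClass (f₁ * f₂ * X ⟨v, hvP⟩) (polyominoIdeal K P) := by
  subst hunion
  have hg := hsf.ne_zero
  have hf₁ : f₁ ≠ 0 := left_ne_zero_of_mul (left_ne_zero_of_mul hg)
  have hf₂ : f₂ ≠ 0 := right_ne_zero_of_mul (left_ne_zero_of_mul hg)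
  have hX : (X ⟨v, hvP⟩ : PolyRing K (P₁ ∪ P₂)) ≠ 0 := right_ne_zero_of_mul hg
  have hK₁' : KnutsonClass (f₁ * f₂ * X ⟨v, hvP⟩) (cellsIdeal K _ P₁) := by
    rw [mul_assoc]
    exact (KnutsonClass.span_singleton_of_mul f₁ (mul_ne_zero hf₂ hX)).trans hK₁
  have hK₂' : KnutsonClass (f₁ * f₂ * X ⟨v, hvP⟩) (cellsIdeal K _ P₂) := by
    rw [show f₁ * f₂ * X ⟨v, hvP⟩ = f₂ * (f₁ * X ⟨v, hvP⟩) by ring]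
    exact (KnutsonClass.span_singleton_of_mul f₂ (mul_ne_zero hf₁ hX)).trans hK₂
  rw [polyominoIdeal, cellsIdeal_union hv]
  exact .add _ _ hK₁' hK₂'

/-- If `P = P₁ ∪ P₂` with no common cell and `V(P₁) ∩ V(P₂) = {v}`,
`I_{P₁} ∈ C_{f₁}`, `I_{P₂} ∈ C_{f₂}` and `in_<(f₁ f₂ x_v)` is squarefree, then
`I_P ∈ C_{f₁ f₂ x_v}`. -/
theorem glue_at_vertex_knutson (K : Type*) [Field K] (P P₁ P₂ : Finset Cell)
    (hunion : P = P₁ ∪ P₂) (hcelldisj : Disjoint P₁ P₂)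
    (v : ℕ × ℕ) (hv : vertexSet P₁ ∩ vertexSet P₂ = {v}) (hvP : v ∈ vertexSet P)
    (m : MonomialOrder.{0, v} {u : ℕ × ℕ // u ∈ vertexSet P})
    (f₁ f₂ : PolyRing K P)
    (h₁ : HasSquarefreeInitial m f₁) (h₂ : HasSquarefreeInitial m f₂)
    (hK₁ : KnutsonClass f₁ (cellsIdeal K P P₁))
    (hK₂ : KnutsonClass f₂ (cellsIdeal K P P₂))
    (hsf : HasSquarefreeInitial m (f₁ * f₂ * X ⟨v, hvP⟩)) :
    KnutsonClass (f₁ * f₂ * X ⟨v, hvP⟩) (polyominoIdeal K P) :=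
  glue_at_vertex_knutson_general K P P₁ P₂ hunion v hv hvP m f₁ f₂ hK₁ hK₂ hsf
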